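/- Let A = (E, {M_k}_{k∈O}) be a quantum algorithm on a d-dimensional space, ε ≥ 0, δ ≥ 0, and 0 ≤ η ≤ 1. Suppose S ⊆ O satisfies δ < δ_S := η·λ_max(M_S) − (e^ε + η − 1)·λ_min(M_S), where M_S = ∑_{k∈S} E†(M_k). Let |ψ⟩ and |φ⟩ be unit eigenvectors of M_S for the eigenvalues λ_max(M_S) and λ_min(M_S), respectively, and set γ = η|ψ⟩⟨ψ| + (1−η)|φ⟩⟨φ| and Φ = |φ⟩⟨φ|. Then γ and Φ are density matrices with D(γ,Φ) ≤ η and ∑_{k∈S} tr(M_k E(γ)) > e^ε · ∑_{k∈S} tr(M_k E(Φ)) + δ; that is, (γ,Φ) is an (ε,δ)-differential privacy counterexample of A within η. -/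

import Mathlib

open Matrix BigOperators
open scoped ComplexOrder

namespace QDP

variable {n : Type*} [Fintype n] [DecidableEq n]

/-- Trace distance `D(ρ,σ) = (1/2) tr |ρ - σ|`, where `|A| = sqrt (Aᴴ A)`. -/
noncomputable def traceDist (ρ σ : Matrix n n ℂ) : ℝ :=
  (1 / 2 : ℝ) * (((Matrix.posSemidef_conjTranspose_mul_self (ρ - σ)).1.eigenvectorUnitary.1 *
    diagonal ((fun x : ℝ => (x : ℂ)) ∘ (√·) ∘ (Matrix.posSemidef_conjTranspose_mul_self (ρ - σ)).1.eigenvalues) *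
    (star (Matrix.posSemidef_conjTranspose_mul_self (ρ - σ)).1.eigenvectorUnitary :
      Matrix n n ℂ)).trace).re

/-- A density matrix: positive semidefinite with trace one. -/
def IsDensity (ρ : Matrix n n ℂ) : Prop := ρ.PosSemidef ∧ ρ.trace = 1

/-- The largest eigenvalue of a (Hermitian) matrix. -/
noncomputable def lamMax (M : Matrix n n ℂ) : ℝ :=
  if h : M.IsHermitian then ⨆ i, h.eigenvalues i else 0

/-- The smallest eigenvalue of a (Hermitian) matrix. -/
noncomputable def lamMin (M : Matrix n n ℂ) : ℝ :=
  if h : M.IsHermitian then ⨅ i, h.eigenvalues i else 0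

/-- Application of a quantum channel given by Kraus matrices. -/
noncomputable def applyChan {ι : Type*} [Fintype ι] (E : ι → Matrix n n ℂ)
    (ρ : Matrix n n ℂ) : Matrix n n ℂ := ∑ j, E j * ρ * (E j)ᴴ

/-- The dual of a quantum channel given by Kraus matrices. -/
noncomputable def dualChan {ι : Type*} [Fintype ι] (E : ι → Matrix n n ℂ)
    (M : Matrix n n ℂ) : Matrix n n ℂ := ∑ j, (E j)ᴴ * M * E j

/-- `(ε,δ)`-differential privacy within `η` of the quantum algorithm `(E, M)`. -/
def IsDP {ι : Type*} [Fintype ι] {O : Type*} [Fintype O]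
    (E : ι → Matrix n n ℂ) (M : O → Matrix n n ℂ) (ε δ η : ℝ) : Prop :=
  ∀ ρ σ : Matrix n n ℂ, IsDensity ρ → IsDensity σ → traceDist ρ σ ≤ η →
    ∀ S : Finset O,
      (∑ k ∈ S, (M k * applyChan E ρ).trace).re ≤
        Real.exp ε * (∑ k ∈ S, (M k * applyChan E σ).trace).re + δ

/-- Rank-one projection `|ψ⟩⟨ψ|`. -/
noncomputable def proj (ψ : n → ℂ) : Matrix n n ℂ := vecMulVec ψ (star ψ)

end QDP

/-!
The eigenvectors `ψ` and `φ` of the Hermitian matrix `M_S` belong to different eigenvalues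
(if `λ_max = λ_min` then `δ_S = (1 - e^ε) λ_min ≤ 0 ≤ δ`), so they are orthogonal. Hence
`γ - Φ = η (|ψ⟩⟨ψ| - |φ⟩⟨φ|)` has absolute value `η (|ψ⟩⟨ψ| + |φ⟩⟨φ|)` and `D(γ, Φ) = η`.
By duality `∑_{k ∈ S} tr (M_k E(ρ)) = tr (M_S ρ)`, which is `η λ_max + (1 - η) λ_min` at `γ` and
`λ_min` at `Φ`; the gap exceeds `e^ε λ_min + δ` exactly when `δ < δ_S`.
-/

namespace QDP

variable {n : Type*} [Fintype n]

lemma isDensity_smul_add_smul {ρ σ : Matrix n n ℂ} (hρ : IsDensity ρ) (hσ : IsDensity σ)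
    {t : ℝ} (ht0 : 0 ≤ t) (ht1 : t ≤ 1) :
    IsDensity ((t : ℂ) • ρ + ((1 - t : ℝ) : ℂ) • σ) := by
  refine ⟨(hρ.1.smul (Complex.zero_le_real.mpr ht0)).add
    (hσ.1.smul (Complex.zero_le_real.mpr (sub_nonneg.mpr ht1))), ?_⟩
  rw [trace_add, trace_smul, trace_smul, hρ.2, hσ.2]
  push_cast
  ring

lemma proj_isHermitian (v : n → ℂ) : (proj v).IsHermitian :=
  (posSemidef_vecMulVec_self_star v).1

lemma trace_proj (v : n → ℂ) : (proj v).trace = star v ⬝ᵥ v := by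
  rw [proj, trace_vecMulVec, dotProduct_comm]

lemma isDensity_proj {v : n → ℂ} (hv : star v ⬝ᵥ v = 1) : IsDensity (proj v) :=
  ⟨posSemidef_vecMulVec_self_star v, by rw [trace_proj, hv]⟩

lemma proj_mul_proj (v w : n → ℂ) :
    proj v * proj w = (star v ⬝ᵥ w) • vecMulVec v (star w) := by
  rw [proj, proj, vecMulVec_mul_vecMulVec, vecMulVec_smul]

lemma trace_mul_proj (A : Matrix n n ℂ) (v : n → ℂ) :
    (A * proj v).trace = star v ⬝ᵥ (A *ᵥ v) := by
  rw [proj, mul_vecMulVec, trace_vecMulVec, dotProduct_comm]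

lemma trace_mul_proj_of_mulVec_eq_smul {A : Matrix n n ℂ} {v : n → ℂ} {c : ℂ}
    (hv : star v ⬝ᵥ v = 1) (hAv : A *ᵥ v = c • v) : (A * proj v).trace = c := by
  rw [trace_mul_proj, hAv, dotProduct_smul, hv, smul_eq_mul, mul_one]

lemma _root_.Matrix.IsHermitian.dotProduct_eq_zero_of_mulVec_eq_smul {𝕜 : Type*} [RCLike 𝕜]
    {A : Matrix n n 𝕜} (hA : A.IsHermitian) {v w : n → 𝕜} {a b : ℝ}
    (hv : A *ᵥ v = (a : 𝕜) • v) (hw : A *ᵥ w = (b : 𝕜) • w) (hab : a ≠ b) :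
    star v ⬝ᵥ w = 0 := by
  have hvA : star v ᵥ* A = (a : 𝕜) • star v := by
    rw [← hA.eq, ← star_mulVec, hv, star_smul, RCLike.star_def, RCLike.conj_ofReal]
  have key : (a : 𝕜) * (star v ⬝ᵥ w) = b * (star v ⬝ᵥ w) := by
    rw [← smul_eq_mul, ← smul_dotProduct, ← hvA, ← dotProduct_mulVec, hw, dotProduct_smul,
      smul_eq_mul]
  exact (mul_eq_mul_right_iff.mp key).resolve_left (by exact_mod_cast hab)

lemma traceDist_eq_of_conjTranspose_mul_self_eq_sq [DecidableEq n] {ρ σ B : Matrix n n ℂ}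
    (hB : B.PosSemidef) (h : (ρ - σ)ᴴ * (ρ - σ) = B ^ 2) : traceDist ρ σ = B.trace.re / 2 := by
  have hH := (posSemidef_conjTranspose_mul_self (ρ - σ)).1
  -- The matrix inside `traceDist` is `hH.cfc Real.sqrt`, and `√(x ^ 2) = x` on the spectrum of `B`.
  have hsqrt : hH.cfc Real.sqrt = B :=
    calc hH.cfc Real.sqrt = cfc Real.sqrt ((ρ - σ)ᴴ * (ρ - σ)) := (hH.cfc_eq _).symm
      _ = cfc (fun x => Real.sqrt (x ^ 2)) B := by
          rw [h, cfc_comp_pow _ _ _ (ha := hB.1.isSelfAdjoint)]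
      _ = cfc (id : ℝ → ℝ) B := cfc_congr fun x hx => by
          rw [hB.1.spectrum_real_eq_range_eigenvalues] at hx
          obtain ⟨i, rfl⟩ := hx
          exact Real.sqrt_sq (hB.eigenvalues_nonneg i)
      _ = B := cfc_id ℝ B (ha := hB.1.isSelfAdjoint)
  rw [← hsqrt, IsHermitian.cfc, Unitary.conjStarAlgAut_apply, traceDist]
  exact one_div_mul_eq_div _ _

lemma traceDist_smul_add_smul_proj_of_orthogonal [DecidableEq n] {ψ φ : n → ℂ}
    (hψ : star ψ ⬝ᵥ ψ = 1) (hφ : star φ ⬝ᵥ φ = 1) (hψφ : star ψ ⬝ᵥ φ = 0) {t : ℝ} (ht : 0 ≤ t) :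
    traceDist ((t : ℂ) • proj ψ + ((1 - t : ℝ) : ℂ) • proj φ) (proj φ) = t := by
  have hφψ : star φ ⬝ᵥ ψ = 0 := by rw [star_dotProduct, hψφ, star_zero]
  have hψψ : proj ψ * proj ψ = proj ψ := by rw [proj_mul_proj, hψ, one_smul, proj]
  have hφφ : proj φ * proj φ = proj φ := by rw [proj_mul_proj, hφ, one_smul, proj]
  have hψφ' : proj ψ * proj φ = 0 := by rw [proj_mul_proj, hψφ, zero_smul]
  have hφψ' : proj φ * proj ψ = 0 := by rw [proj_mul_proj, hφψ, zero_smul]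
  have hdiff : (t : ℂ) • proj ψ + ((1 - t : ℝ) : ℂ) • proj φ - proj φ =
      (t : ℂ) • (proj ψ - proj φ) := by
    push_cast
    module
  -- For orthogonal projections `P, Q`, both `(P - Q)ᴴ (P - Q)` and `(P + Q) ^ 2` equal `P + Q`.
  have hsq : ((t : ℂ) • (proj ψ - proj φ))ᴴ * ((t : ℂ) • (proj ψ - proj φ)) =
      ((t : ℂ) • (proj ψ + proj φ)) ^ 2 := by
    rw [conjTranspose_smul, conjTranspose_sub, (proj_isHermitian ψ).eq,
      (proj_isHermitian φ).eq, Complex.star_def, Complex.conj_ofReal, sq, smul_mul_smul,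
      smul_mul_smul, sub_mul, mul_sub, mul_sub, add_mul, mul_add, mul_add, hψψ, hφφ, hψφ',
      hφψ']
    congr 1
    abel
  have hB : ((t : ℂ) • (proj ψ + proj φ)).PosSemidef :=
    ((isDensity_proj hψ).1.add (isDensity_proj hφ).1).smul (Complex.zero_le_real.mpr ht)
  rw [traceDist_eq_of_conjTranspose_mul_self_eq_sq hB (hdiff ▸ hsq), trace_smul, trace_add,
    trace_proj, trace_proj, hψ, hφ]
  norm_num

lemma trace_mul_applyChan {ι : Type*} [Fintype ι] (E : ι → Matrix n n ℂ) (A ρ : Matrix n n ℂ) :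
    (A * applyChan E ρ).trace = (dualChan E A * ρ).trace := by
  simp only [applyChan, dualChan, Finset.mul_sum, Finset.sum_mul, trace_sum]
  refine Finset.sum_congr rfl fun j _ => ?_
  rw [← mul_assoc, trace_mul_cycle, mul_assoc, mul_assoc, mul_assoc]

lemma dualChan_posSemidef {ι : Type*} [Fintype ι] (E : ι → Matrix n n ℂ) {A : Matrix n n ℂ}
    (hA : A.PosSemidef) : (dualChan E A).PosSemidef :=
  posSemidef_sum _ fun j _ => hA.conjTranspose_mul_mul_same (E j)

end QDP

open QDP in
theorem dp_counterexample_general {d : ℕ} {ι O : Type} [Fintype ι] [Fintype O]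
    (E : ι → Matrix (Fin d) (Fin d) ℂ)
    (M : O → Matrix (Fin d) (Fin d) ℂ) (hMpos : ∀ k, (M k).PosSemidef)
    (ε δ η : ℝ) (hε : 0 ≤ ε) (hδ : 0 ≤ δ) (hη0 : 0 ≤ η) (hη1 : η ≤ 1)
    (S : Finset O)
    (hδS : δ < η * lamMax (∑ k ∈ S, dualChan E (M k)) -
        (Real.exp ε + η - 1) * lamMin (∑ k ∈ S, dualChan E (M k)))
    (ψ φ : Fin d → ℂ) (hψ : star ψ ⬝ᵥ ψ = 1) (hφ : star φ ⬝ᵥ φ = 1)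
    (hψe : (∑ k ∈ S, dualChan E (M k)) *ᵥ ψ =
        ((lamMax (∑ k ∈ S, dualChan E (M k)) : ℝ) : ℂ) • ψ)
    (hφe : (∑ k ∈ S, dualChan E (M k)) *ᵥ φ =
        ((lamMin (∑ k ∈ S, dualChan E (M k)) : ℝ) : ℂ) • φ) :
    IsDensity ((η : ℂ) • proj ψ + ((1 - η : ℝ) : ℂ) • proj φ) ∧
    IsDensity (proj φ) ∧
    traceDist ((η : ℂ) • proj ψ + ((1 - η : ℝ) : ℂ) • proj φ) (proj φ) ≤ η ∧
    (∑ k ∈ S, (M k * applyChan E ((η : ℂ) • proj ψ + ((1 - η : ℝ) : ℂ) • proj φ)).trace).re >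
      Real.exp ε * (∑ k ∈ S, (M k * applyChan E (proj φ)).trace).re + δ := by
  set N := ∑ k ∈ S, dualChan E (M k)
  have hN : N.PosSemidef := posSemidef_sum S fun k _ => dualChan_posSemidef E (hMpos k)
  have hNψ := trace_mul_proj_of_mulVec_eq_smul hψ hψe
  have hNφ := trace_mul_proj_of_mulVec_eq_smul hφ hφe
  have hmin_nonneg : 0 ≤ lamMin N := by
    simpa [← trace_mul_proj, hNφ] using hN.dotProduct_mulVec_nonneg φ
  have hne : lamMax N ≠ lamMin N := fun h => by
    nlinarith [Real.one_le_exp hε]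
  have hψφ := hN.1.dotProduct_eq_zero_of_mulVec_eq_smul hψe hφe hne
  have hsum : ∀ ρ, ∑ k ∈ S, (M k * applyChan E ρ).trace = (N * ρ).trace := fun ρ => by
    simp only [trace_mul_applyChan, N, Finset.sum_mul, trace_sum]
  refine ⟨isDensity_smul_add_smul (isDensity_proj hψ) (isDensity_proj hφ) hη0 hη1,
    isDensity_proj hφ, (traceDist_smul_add_smul_proj_of_orthogonal hψ hφ hψφ hη0).le, ?_⟩
  simp only [hsum, mul_add, Matrix.mul_smul, trace_add, trace_smul, hNψ, hNφ, smul_eq_mul,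
    ← Complex.ofReal_mul, ← Complex.ofReal_add, Complex.ofReal_re]
  linarith

open QDP in
/-- Theorem (counterexamples): if `δ < δ_S` for some subset `S` of outcomes, then the pair
`(γ, Φ)` built from extremal eigenvectors of `M_S` is an `(ε,δ)`-differential privacy
counterexample within `η`. -/
theorem dp_counterexample {d : ℕ} (hd : 1 ≤ d) {ι O : Type} [Fintype ι] [Fintype O]
    (E : ι → Matrix (Fin d) (Fin d) ℂ) (hE : ∑ j, (E j)ᴴ * E j = 1)
    (M : O → Matrix (Fin d) (Fin d) ℂ) (hMpos : ∀ k, (M k).PosSemidef)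
    (hMsum : ∑ k, M k = 1)
    (ε δ η : ℝ) (hε : 0 ≤ ε) (hδ : 0 ≤ δ) (hη0 : 0 ≤ η) (hη1 : η ≤ 1)
    (S : Finset O)
    (hδS : δ < η * lamMax (∑ k ∈ S, dualChan E (M k)) -
        (Real.exp ε + η - 1) * lamMin (∑ k ∈ S, dualChan E (M k)))
    (ψ φ : Fin d → ℂ) (hψ : star ψ ⬝ᵥ ψ = 1) (hφ : star φ ⬝ᵥ φ = 1)
    (hψe : (∑ k ∈ S, dualChan E (M k)) *ᵥ ψ =
        ((lamMax (∑ k ∈ S, dualChan E (M k)) : ℝ) : ℂ) • ψ)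
    (hφe : (∑ k ∈ S, dualChan E (M k)) *ᵥ φ =
        ((lamMin (∑ k ∈ S, dualChan E (M k)) : ℝ) : ℂ) • φ) :
    IsDensity ((η : ℂ) • proj ψ + ((1 - η : ℝ) : ℂ) • proj φ) ∧
    IsDensity (proj φ) ∧
    traceDist ((η : ℂ) • proj ψ + ((1 - η : ℝ) : ℂ) • proj φ) (proj φ) ≤ η ∧
    (∑ k ∈ S, (M k * applyChan E ((η : ℂ) • proj ψ + ((1 - η : ℝ) : ℂ) • proj φ)).trace).re >
      Real.exp ε * (∑ k ∈ S, (M k * applyChan E (proj φ)).trace).re + δ :=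
  dp_counterexample_general E M hMpos ε δ η hε hδ hη0 hη1 S hδS ψ φ hψ hφ hψe hφe
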